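/- arXiv:2003.02954 — 2 statements merged into one kernel-verified Lean document; each statement's English description precedes it below -/
import Mathlib

section
/- Assume μ1 ≤ μ2 and ρ̂1 < ρ < ρ̂2, and set t* = √(2(1−ρ)/(μ1² + μ2² − 2ρ·μ1·μ2)). Then inf_{(t,s)∈(0,∞)²} g(t,s) = (2/(1+ρ))·(μ1 + μ2 + 2/t*), and this infimum is attained at the unique point (t*, t*) on the diagonal. -/
/-!
For a weight `w ≥ 0`, Cauchy–Schwarz for the inner product defined by `Σ_{ts}` gives
`g(t,s) ≥ (w ⬝ b)² / (w ⬝ Σ_{ts} w)`, where `b = (1 + μ₁t, 1 + μ₂s)` is the corner of the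
constraint region. Choose `w = Σ_{t*t*}⁻¹ b(t*,t*)`; the conditions `ρ̂₁ < ρ < ρ̂₂` make
`0 < wᵢ < 2μᵢ`, so `w ≥ 0` and the corner is the minimiser at `(t*, t*)`. With `a = w₁ + w₂`,
`(w ⬝ b)² - 2a (w ⬝ Σ_{ts} w) = (w ⬝ b - 2a)² + 2a X(t,s)`, where `X` is linear on either side of
the diagonal, vanishes on it (this is the equation defining `t*`), and is positive off it.
Hence the bound exceeds `2a = g(t*,t*)` except at `(t*, t*)`.
-/

open Matrix

/-- Covariance matrix `Σ_{ts}` of `(X₁(t), X₂(s))` for a correlated Brownian motion with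
correlation `ρ`. -/
noncomputable def covM (ρ t s : ℝ) : Matrix (Fin 2) (Fin 2) ℝ :=
  !![t, ρ * min t s; ρ * min t s, s]

/-- `g(t,s) = inf { (x,y) Σ_{ts}⁻¹ (x,y)ᵀ : x ≥ 1 + μ₁ t, y ≥ 1 + μ₂ s }`. -/
noncomputable def gfun (ρ μ1 μ2 t s : ℝ) : ℝ :=
  sInf {v : ℝ | ∃ x y : ℝ, 1 + μ1 * t ≤ x ∧ 1 + μ2 * s ≤ y ∧
    v = ![x, y] ⬝ᵥ ((covM ρ t s)⁻¹ *ᵥ ![x, y])}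

namespace Matrix.PosDef

variable {n : Type*} [Fintype n] [DecidableEq n] {A : Matrix n n ℝ}

theorem sq_dotProduct_le_mul (hA : A.PosDef) (v w : n → ℝ) :
    (w ⬝ᵥ v) ^ 2 ≤ (v ⬝ᵥ A⁻¹ *ᵥ v) * (w ⬝ᵥ A *ᵥ w) := by
  have hsymm : ∀ x y : n → ℝ, x ⬝ᵥ A *ᵥ y = y ⬝ᵥ A *ᵥ x := fun x y => by
    rw [dotProduct_mulVec, ← mulVec_transpose, dotProduct_comm,
      ← conjTranspose_eq_transpose_of_trivial, hA.isHermitian.eq]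
  have hcancel : A *ᵥ (A⁻¹ *ᵥ v) = v := by
    rw [mulVec_mulVec, mul_nonsing_inv _ ((isUnit_iff_isUnit_det A).mp hA.isUnit), one_mulVec]
  have hquad : ∀ c : ℝ,
      0 ≤ (w ⬝ᵥ A *ᵥ w) * (c * c) + -2 * (w ⬝ᵥ v) * c + v ⬝ᵥ A⁻¹ *ᵥ v := fun c => by
    have h := hA.posSemidef.dotProduct_mulVec_nonneg (c • w - A⁻¹ *ᵥ v)
    rw [star_trivial, mulVec_sub, hcancel, mulVec_smul, sub_dotProduct, dotProduct_sub,
      dotProduct_sub, smul_dotProduct, smul_dotProduct, dotProduct_smul, dotProduct_smul,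
      hsymm (A⁻¹ *ᵥ v), hcancel, dotProduct_comm (A⁻¹ *ᵥ v)] at h
    simp only [smul_eq_mul] at h
    linarith
  have hdisc := discrim_le_zero hquad
  rw [discrim] at hdisc
  nlinarith

theorem sq_dotProduct_div_le_of_le (hA : A.PosDef) {w b v : n → ℝ} (hw : 0 ≤ w)
    (hwb : 0 ≤ w ⬝ᵥ b) (hbv : b ≤ v) : (w ⬝ᵥ b) ^ 2 / (w ⬝ᵥ A *ᵥ w) ≤ v ⬝ᵥ A⁻¹ *ᵥ v := by
  have hQ : 0 ≤ v ⬝ᵥ A⁻¹ *ᵥ v := by simpa using hA.inv.posSemidef.dotProduct_mulVec_nonneg v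
  have hS : 0 ≤ w ⬝ᵥ A *ᵥ w := by simpa using hA.posSemidef.dotProduct_mulVec_nonneg w
  refine div_le_of_le_mul₀ hS hQ ?_
  calc (w ⬝ᵥ b) ^ 2 ≤ (w ⬝ᵥ v) ^ 2 :=
        pow_le_pow_left₀ hwb (dotProduct_le_dotProduct_of_nonneg_left hbv hw) 2
    _ ≤ _ := hA.sq_dotProduct_le_mul v w

end Matrix.PosDef

theorem dotProduct_covM_mulVec (ρ t s : ℝ) (w : Fin 2 → ℝ) :
    w ⬝ᵥ covM ρ t s *ᵥ w = w 0 ^ 2 * t + 2 * ρ * min t s * w 0 * w 1 + w 1 ^ 2 * s := by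
  simp [covM, dotProduct, mulVec, Fin.sum_univ_two]
  ring

theorem covM_posDef {ρ t s : ℝ} (hρ : |ρ| < 1) (ht : 0 < t) (hs : 0 < s) :
    (covM ρ t s).PosDef := by
  refine .of_dotProduct_mulVec_pos ?_ fun w hw => ?_
  · ext i j
    fin_cases i <;> fin_cases j <;> simp [covM]
  · have hρ2 : ρ ^ 2 < 1 := (sq_lt_one_iff_abs_lt_one ρ).mpr hρ
    have hw' : w 0 ≠ 0 ∨ w 1 ≠ 0 := by
      by_contra! h
      exact hw (by ext i; fin_cases i <;> simp [h])
    have hm : 0 < min t s := lt_min ht hs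
    have hq : 0 < w 0 ^ 2 + 2 * ρ * w 0 * w 1 + w 1 ^ 2 := by
      rcases hw' with h | h
      · nlinarith [sq_nonneg (ρ * w 0 + w 1), sq_pos_of_ne_zero h]
      · nlinarith [sq_nonneg (w 0 + ρ * w 1), sq_pos_of_ne_zero h]
    rw [star_trivial, dotProduct_covM_mulVec]
    nlinarith [min_le_left t s, min_le_right t s, sq_nonneg (w 0), sq_nonneg (w 1), mul_pos hm hq]

section gfun

variable {ρ μ1 μ2 t s : ℝ}

theorem sq_div_le_gfun (hρ : |ρ| < 1) (ht : 0 < t) (hs : 0 < s) {w : Fin 2 → ℝ} (hw : 0 ≤ w)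
    (hwb : 0 ≤ w ⬝ᵥ ![1 + μ1 * t, 1 + μ2 * s]) :
    (w ⬝ᵥ ![1 + μ1 * t, 1 + μ2 * s]) ^ 2 / (w ⬝ᵥ covM ρ t s *ᵥ w) ≤ gfun ρ μ1 μ2 t s := by
  refine le_csInf ⟨_, _, _, le_rfl, le_rfl, rfl⟩ ?_
  rintro _ ⟨x, y, hx, hy, rfl⟩
  refine (covM_posDef hρ ht hs).sq_dotProduct_div_le_of_le hw hwb fun i => ?_
  fin_cases i <;> simpa

theorem gfun_eq_dotProduct_of_covM_mulVec (hρ : |ρ| < 1) (ht : 0 < t) (hs : 0 < s)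
    {w : Fin 2 → ℝ} (hw : 0 ≤ w) (hw_eq : covM ρ t s *ᵥ w = ![1 + μ1 * t, 1 + μ2 * s]) :
    gfun ρ μ1 μ2 t s = w ⬝ᵥ ![1 + μ1 * t, 1 + μ2 * s] := by
  have hA := covM_posDef hρ ht hs
  have hinv : (covM ρ t s)⁻¹ *ᵥ ![1 + μ1 * t, 1 + μ2 * s] = w := by
    rw [← hw_eq, mulVec_mulVec, nonsing_inv_mul _ ((isUnit_iff_isUnit_det _).mp hA.isUnit),
      one_mulVec]
  have hS : w ⬝ᵥ covM ρ t s *ᵥ w = w ⬝ᵥ ![1 + μ1 * t, 1 + μ2 * s] := by rw [hw_eq]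
  have hwb : 0 ≤ w ⬝ᵥ ![1 + μ1 * t, 1 + μ2 * s] := by
    rw [← hS]; simpa using hA.posSemidef.dotProduct_mulVec_nonneg w
  refine IsLeast.csInf_eq ⟨⟨_, _, le_rfl, le_rfl, by rw [hinv, dotProduct_comm]⟩, ?_⟩
  rintro _ ⟨x, y, hx, hy, rfl⟩
  have h := hA.sq_dotProduct_div_le_of_le hw hwb (v := ![x, y]) fun i => by
    fin_cases i <;> simpa
  rwa [hS, sq, mul_self_div_self] at h

end gfun

theorem two_mul_add_mul_le_sq {ρ μ1 μ2 w1 w2 t s : ℝ} (hw1 : 0 < w1) (hw2 : 0 < w2)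
    (hw1μ : w1 < 2 * μ1) (hw2μ : w2 < 2 * μ2)
    (hstat : w1 ^ 2 + 2 * ρ * w1 * w2 + w2 ^ 2 = 2 * (w1 * μ1 + w2 * μ2)) :
    2 * (w1 + w2) * (w1 ^ 2 * t + 2 * ρ * min t s * w1 * w2 + w2 ^ 2 * s)
        ≤ (w1 * (1 + μ1 * t) + w2 * (1 + μ2 * s)) ^ 2 ∧
      ((w1 * (1 + μ1 * t) + w2 * (1 + μ2 * s)) ^ 2
          ≤ 2 * (w1 + w2) * (w1 ^ 2 * t + 2 * ρ * min t s * w1 * w2 + w2 ^ 2 * s) →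
        t = s ∧ (w1 * μ1 + w2 * μ2) * t = w1 + w2) := by
  set L := w1 * (1 + μ1 * t) + w2 * (1 + μ2 * s)
  set S := w1 ^ 2 * t + 2 * ρ * min t s * w1 * w2 + w2 ^ 2 * s with hS
  set X := 2 * (w1 * μ1 * t + w2 * μ2 * s) - S with hX
  have hdecomp : L ^ 2 - 2 * (w1 + w2) * S = (L - 2 * (w1 + w2)) ^ 2 + 2 * (w1 + w2) * X := by
    ring
  have hslack : 0 ≤ X ∧ (X = 0 → t = s) := by
    rcases le_total t s with h | h
    · have hc : 0 < 2 * w2 * μ2 - w2 ^ 2 := by nlinarith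
      have hX' : X = (2 * w2 * μ2 - w2 ^ 2) * (s - t) := by
        rw [hX, hS, min_eq_left h]; linear_combination (-t) * hstat
      refine ⟨by rw [hX']; nlinarith, fun h0 => ?_⟩
      rcases mul_eq_zero.mp (hX' ▸ h0) with h0 | h0 <;> linarith
    · have hc : 0 < 2 * w1 * μ1 - w1 ^ 2 := by nlinarith
      have hX' : X = (2 * w1 * μ1 - w1 ^ 2) * (t - s) := by
        rw [hX, hS, min_eq_right h]; linear_combination (-s) * hstat
      refine ⟨by rw [hX']; nlinarith, fun h0 => ?_⟩
      rcases mul_eq_zero.mp (hX' ▸ h0) with h0 | h0 <;> linarith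
  have ha : 0 < w1 + w2 := by linarith
  refine ⟨by nlinarith [sq_nonneg (L - 2 * (w1 + w2))], fun hle => ?_⟩
  have hL : L = 2 * (w1 + w2) := by nlinarith [sq_nonneg (L - 2 * (w1 + w2))]
  have hts : t = s := hslack.2 (by nlinarith [sq_nonneg (L - 2 * (w1 + w2))])
  subst hts
  exact ⟨rfl, by linear_combination hL⟩

theorem isLeast_gfun_of_dual {ρ μ1 μ2 T : ℝ} {w : Fin 2 → ℝ} (hρ : |ρ| < 1) (hT : 0 < T)
    (hw_eq : covM ρ T T *ᵥ w = ![1 + μ1 * T, 1 + μ2 * T])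
    (hw0 : 0 < w 0) (hw1 : 0 < w 1) (hw0μ : w 0 < 2 * μ1) (hw1μ : w 1 < 2 * μ2)
    (hstat : w 0 ^ 2 + 2 * ρ * w 0 * w 1 + w 1 ^ 2 = 2 * (w 0 * μ1 + w 1 * μ2)) :
    IsLeast {v | ∃ t s, 0 < t ∧ 0 < s ∧ v = gfun ρ μ1 μ2 t s} (2 * (w 0 + w 1)) ∧
      gfun ρ μ1 μ2 T T = 2 * (w 0 + w 1) ∧
      ∀ t s, 0 < t → 0 < s → gfun ρ μ1 μ2 t s = 2 * (w 0 + w 1) → t = T ∧ s = T := by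
  have hw : 0 ≤ w := fun i => by fin_cases i <;> simp [hw0.le, hw1.le]
  have hb : ∀ t s, w ⬝ᵥ ![1 + μ1 * t, 1 + μ2 * s] = w 0 * (1 + μ1 * t) + w 1 * (1 + μ2 * s) :=
    fun t s => by simp [dotProduct, Fin.sum_univ_two]
  have hbound : ∀ t s, 0 < t → 0 < s → 2 * (w 0 + w 1) ≤ gfun ρ μ1 μ2 t s ∧
      (gfun ρ μ1 μ2 t s ≤ 2 * (w 0 + w 1) → t = s ∧ (w 0 * μ1 + w 1 * μ2) * t = w 0 + w 1) := by
    intro t s ht hs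
    have hS : 0 < w ⬝ᵥ covM ρ t s *ᵥ w := by
      simpa using (covM_posDef hρ ht hs).dotProduct_mulVec_pos (x := w)
        fun h => hw0.ne' (by simp [h])
    have hL : 0 ≤ w ⬝ᵥ ![1 + μ1 * t, 1 + μ2 * s] := by
      have : 0 < μ1 := by linarith
      have : 0 < μ2 := by linarith
      rw [hb]; positivity
    have hg := sq_div_le_gfun hρ ht hs hw hL
    obtain ⟨hle, heq⟩ := two_mul_add_mul_le_sq (t := t) (s := s) hw0 hw1 hw0μ hw1μ hstat
    rw [hb, dotProduct_covM_mulVec] at hg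
    rw [dotProduct_covM_mulVec] at hS
    exact ⟨((le_div_iff₀ hS).mpr hle).trans hg, fun h => heq ((div_le_iff₀ hS).mp (hg.trans h))⟩
  have hTm : (w 0 * μ1 + w 1 * μ2) * T = w 0 + w 1 := by
    have hquad := dotProduct_covM_mulVec ρ T T w
    rw [hw_eq, hb, min_self] at hquad
    linear_combination -hquad - T * hstat
  have hval : gfun ρ μ1 μ2 T T = 2 * (w 0 + w 1) := by
    rw [gfun_eq_dotProduct_of_covM_mulVec hρ hT hT hw hw_eq, hb]
    linear_combination hTm
  refine ⟨⟨⟨T, T, hT, hT, hval.symm⟩, ?_⟩, hval, fun t s ht hs h => ?_⟩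
  · rintro _ ⟨t, s, ht, hs, rfl⟩
    exact (hbound t s ht hs).1
  · obtain ⟨rfl, ht⟩ := (hbound t s ht hs).2 h.le
    have hm : 0 < w 0 * μ1 + w 1 * μ2 := by nlinarith
    have htT : t = T := mul_left_cancel₀ hm.ne' (ht.trans hTm.symm)
    exact ⟨htT, htT⟩

theorem neg_half_lt_and_quadratic_neg {ρ μ1 μ2 : ℝ} (hμ1 : 0 < μ1) (hμ12 : μ1 ≤ μ2)
    (hρl : (μ1 + μ2 - Real.sqrt ((μ1 + μ2) ^ 2 - 4 * μ1 * (μ2 - μ1))) / (4 * μ1) < ρ)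
    (hρu : ρ < (μ1 + μ2) / (2 * μ2)) :
    -(1 / 2) < ρ ∧ 2 * μ1 * ρ ^ 2 - (μ1 + μ2) * ρ + (μ2 - μ1) / 2 < 0 := by
  have hμ2 : 0 < μ2 := hμ1.trans_le hμ12
  set D := (μ1 + μ2) ^ 2 - 4 * μ1 * (μ2 - μ1) with hD
  have hD0 : 0 ≤ D := by nlinarith [sq_nonneg (μ2 - μ1)]
  have hl : μ1 + μ2 - √D < 4 * μ1 * ρ := by rwa [div_lt_iff₀ (by positivity), mul_comm] at hρl
  have hu : 2 * μ2 * ρ < μ1 + μ2 := by rwa [lt_div_iff₀ (by positivity), mul_comm] at hρu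
  have hsqrt_lt : √D < 3 * μ1 + μ2 := by
    rw [Real.sqrt_lt' (by positivity)]; nlinarith
  have hle_sqrt : (μ1 + μ2) * (2 * μ1 - μ2) ≤ √D * μ2 := by
    have h : ((μ1 + μ2) * (2 * μ1 - μ2)) ^ 2 ≤ D * μ2 ^ 2 := by
      have : 0 ≤ 4 * μ1 ^ 2 * (2 * μ2 + μ1) * (μ2 - μ1) := by
        have := sub_nonneg.mpr hμ12; positivity
      linear_combination this
    calc (μ1 + μ2) * (2 * μ1 - μ2) ≤ √(D * μ2 ^ 2) := Real.le_sqrt_of_sq_le h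
      _ = √D * μ2 := by rw [Real.sqrt_mul hD0, Real.sqrt_sq hμ2.le]
  have hr : 4 * μ1 * ρ - (μ1 + μ2) < √D := by
    have : μ2 * (4 * μ1 * ρ - (μ1 + μ2)) < (μ1 + μ2) * (2 * μ1 - μ2) := by nlinarith
    nlinarith
  have hfactor : 8 * μ1 * (2 * μ1 * ρ ^ 2 - (μ1 + μ2) * ρ + (μ2 - μ1) / 2)
      = (4 * μ1 * ρ - (μ1 + μ2) - √D) * (4 * μ1 * ρ - (μ1 + μ2) + √D) := by
    linear_combination Real.sq_sqrt hD0 - hD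
  refine ⟨by nlinarith, neg_of_mul_neg_right ?_ (by positivity : (0 : ℝ) ≤ 8 * μ1)⟩
  rw [hfactor]
  exact mul_neg_of_neg_of_pos (by linarith) (by linarith)

theorem mul_lt_of_mul_sq_lt {A T c k m : ℝ} (hA : 0 < A) (hm : 0 < m) (hT2 : A * T ^ 2 = c)
    (h : c * k ^ 2 < A * m ^ 2) : k * T < m := by
  refine lt_of_pow_lt_pow_left₀ 2 hm.le (lt_of_mul_lt_mul_left ?_ hA.le)
  linear_combination h + k ^ 2 * hT2

theorem one_sub_add_mul_pos {ρ μ1 μ2 T : ℝ} (hμ1 : 0 < μ1) (hρ1 : ρ < 1)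
    (hρu : 2 * μ2 * ρ < μ1 + μ2) (hA : 0 < μ1 ^ 2 + μ2 ^ 2 - 2 * ρ * μ1 * μ2) (hT : 0 < T)
    (hT2 : (μ1 ^ 2 + μ2 ^ 2 - 2 * ρ * μ1 * μ2) * T ^ 2 = 2 * (1 - ρ)) :
    0 < (1 - ρ) + (μ1 - ρ * μ2) * T := by
  rcases le_or_gt (ρ * μ2) μ1 with h | h
  · nlinarith [mul_nonneg (sub_nonneg.mpr h) hT.le]
  · have hμ2 : 0 < μ2 := by nlinarith
    have hρ0 : 0 < ρ := by nlinarith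
    have hμ12 : μ1 < μ2 := by nlinarith
    have hlt := mul_lt_of_mul_sq_lt hA (sub_pos.mpr hρ1) hT2 (k := ρ * μ2 - μ1) (by
      have := mul_pos (mul_pos (by linarith : 0 < 1 + ρ) (sub_pos.mpr hμ12))
        (by linarith : 0 < μ1 + μ2 - 2 * μ2 * ρ)
      nlinarith [sub_pos.mpr hρ1])
    linarith

theorem one_sub_add_mul_lt {ρ μ1 μ2 T : ℝ} (hρ0 : -(1 / 2) < ρ) (hρ1 : ρ < 1)
    (hf : 2 * μ1 * ρ ^ 2 - (μ1 + μ2) * ρ + (μ2 - μ1) / 2 < 0) (hρu : 2 * μ2 * ρ < μ1 + μ2)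
    (hA : 0 < μ1 ^ 2 + μ2 ^ 2 - 2 * ρ * μ1 * μ2)
    (hT2 : (μ1 ^ 2 + μ2 ^ 2 - 2 * ρ * μ1 * μ2) * T ^ 2 = 2 * (1 - ρ)) :
    (1 - ρ) + (μ2 - ρ * μ1) * T < 2 * (1 - ρ ^ 2) := by
  have hlt := mul_lt_of_mul_sq_lt hA (by nlinarith : 0 < (1 - ρ) * (1 + 2 * ρ)) hT2
    (k := μ2 - ρ * μ1) (by
      have := mul_pos (mul_pos (by linarith : 0 < -(2 * μ1 * ρ ^ 2 - (μ1 + μ2) * ρ + (μ2 - μ1) / 2))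
        (by linarith : 0 < 1 + ρ)) (by linarith : 0 < μ1 + μ2 - 2 * μ2 * ρ)
      nlinarith [sub_pos.mpr hρ1])
  linarith

/-- The witness is `Σ_{TT}⁻¹ (1 + μ₁T, 1 + μ₂T) = (u₁, u₂) / (T (1 - ρ²))`. -/
theorem exists_dual_vec {ρ μ1 μ2 T : ℝ} (hμ12 : μ1 ≤ μ2) (hρ : |ρ| < 1) (hT : 0 < T)
    (hT2 : (μ1 ^ 2 + μ2 ^ 2 - 2 * ρ * μ1 * μ2) * T ^ 2 = 2 * (1 - ρ))
    (hu1 : 0 < (1 - ρ) + (μ1 - ρ * μ2) * T) (hu2 : (1 - ρ) + (μ2 - ρ * μ1) * T < 2 * (1 - ρ ^ 2)) :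
    ∃ w : Fin 2 → ℝ, covM ρ T T *ᵥ w = ![1 + μ1 * T, 1 + μ2 * T] ∧
      0 < w 0 ∧ 0 < w 1 ∧ w 0 < 2 * μ1 ∧ w 1 < 2 * μ2 ∧
      w 0 ^ 2 + 2 * ρ * w 0 * w 1 + w 1 ^ 2 = 2 * (w 0 * μ1 + w 1 * μ2) ∧
      2 * (w 0 + w 1) = 2 / (1 + ρ) * (μ1 + μ2 + 2 / T) := by
  obtain ⟨hρ0, hρ1⟩ := abs_lt.mp hρ
  set u1 := (1 - ρ) + (μ1 - ρ * μ2) * T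
  set u2 := (1 - ρ) + (μ2 - ρ * μ1) * T
  set E := T * (1 - ρ ^ 2)
  have hE : 0 < E := mul_pos hT (by nlinarith)
  have hu12 : u1 ≤ u2 := by nlinarith [mul_nonneg (sub_nonneg.mpr hμ12) hT.le]
  have hc1 : 2 * E * u1 * μ1 - u1 ^ 2 = u2 * (2 * (1 - ρ ^ 2) - u2) := by
    linear_combination (1 - ρ ^ 2) * hT2
  have hc2 : 2 * E * u2 * μ2 - u2 ^ 2 = u1 * (2 * (1 - ρ ^ 2) - u1) := by
    linear_combination (1 - ρ ^ 2) * hT2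
  refine ⟨![u1 / E, u2 / E], ?_, ?_, ?_, ?_, ?_, ?_, ?_⟩
  · ext i; fin_cases i <;> simp [covM, mulVec, dotProduct, Fin.sum_univ_two] <;>
      field_simp <;> ring
  · simp only [Matrix.cons_val_zero]; positivity
  · simp only [Matrix.cons_val_one, Matrix.cons_val_zero]; exact div_pos (by linarith) hE
  · simp only [Matrix.cons_val_zero]
    rw [div_lt_iff₀ hE]; nlinarith
  · simp only [Matrix.cons_val_one, Matrix.cons_val_zero]
    rw [div_lt_iff₀ hE]; nlinarith
  · simp only [Matrix.cons_val_one, Matrix.cons_val_zero]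
    field_simp
    linear_combination (-(1 - ρ ^ 2)) * hT2
  · simp only [Matrix.cons_val_one, Matrix.cons_val_zero, E, u1, u2]
    have : 1 + ρ ≠ 0 := by linarith
    have : 1 - ρ ^ 2 ≠ 0 := by nlinarith
    field_simp
    ring

/-- If `μ₁ ≤ μ₂` and `ρ̂₁ < ρ < ρ̂₂`, with `t* = √(2(1-ρ)/(μ₁² + μ₂² - 2ρμ₁μ₂))`, then
`inf_{(t,s) ∈ (0,∞)²} g(t,s) = (2/(1+ρ))(μ₁ + μ₂ + 2/t*)`, attained at the unique
point `(t*, t*)` on the diagonal. -/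
theorem statement13 (ρ μ1 μ2 : ℝ) (hμ1 : 0 < μ1) (hμ12 : μ1 ≤ μ2)
    (hρl : (μ1 + μ2 - Real.sqrt ((μ1 + μ2) ^ 2 - 4 * μ1 * (μ2 - μ1))) / (4 * μ1) < ρ)
    (hρu : ρ < (μ1 + μ2) / (2 * μ2)) :
    IsLeast {v : ℝ | ∃ t s : ℝ, 0 < t ∧ 0 < s ∧ v = gfun ρ μ1 μ2 t s}
        (2 / (1 + ρ) *
          (μ1 + μ2 + 2 / Real.sqrt (2 * (1 - ρ) / (μ1 ^ 2 + μ2 ^ 2 - 2 * ρ * μ1 * μ2)))) ∧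
      gfun ρ μ1 μ2 (Real.sqrt (2 * (1 - ρ) / (μ1 ^ 2 + μ2 ^ 2 - 2 * ρ * μ1 * μ2)))
          (Real.sqrt (2 * (1 - ρ) / (μ1 ^ 2 + μ2 ^ 2 - 2 * ρ * μ1 * μ2))) =
        2 / (1 + ρ) *
          (μ1 + μ2 + 2 / Real.sqrt (2 * (1 - ρ) / (μ1 ^ 2 + μ2 ^ 2 - 2 * ρ * μ1 * μ2))) ∧
      ∀ t s : ℝ, 0 < t → 0 < s →
        gfun ρ μ1 μ2 t s =
            2 / (1 + ρ) *
              (μ1 + μ2 + 2 / Real.sqrt (2 * (1 - ρ) / (μ1 ^ 2 + μ2 ^ 2 - 2 * ρ * μ1 * μ2))) →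
          t = Real.sqrt (2 * (1 - ρ) / (μ1 ^ 2 + μ2 ^ 2 - 2 * ρ * μ1 * μ2)) ∧
            s = Real.sqrt (2 * (1 - ρ) / (μ1 ^ 2 + μ2 ^ 2 - 2 * ρ * μ1 * μ2)) := by
  obtain ⟨hρ0, hf⟩ := neg_half_lt_and_quadratic_neg hμ1 hμ12 hρl hρu
  have hμ2 : 0 < μ2 := hμ1.trans_le hμ12
  have hρu' : 2 * μ2 * ρ < μ1 + μ2 := by rwa [lt_div_iff₀ (by positivity), mul_comm] at hρu
  have hρ1 : ρ < 1 := by nlinarith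
  have hA : 0 < μ1 ^ 2 + μ2 ^ 2 - 2 * ρ * μ1 * μ2 := by
    nlinarith [sq_nonneg (μ1 - ρ * μ2), mul_pos hμ2 hμ2]
  set T := Real.sqrt (2 * (1 - ρ) / (μ1 ^ 2 + μ2 ^ 2 - 2 * ρ * μ1 * μ2))
  have hT : 0 < T := Real.sqrt_pos.mpr (div_pos (by linarith) hA)
  have hT2 : (μ1 ^ 2 + μ2 ^ 2 - 2 * ρ * μ1 * μ2) * T ^ 2 = 2 * (1 - ρ) := by
    rw [Real.sq_sqrt (div_pos (by linarith) hA).le, mul_div_cancel₀ _ hA.ne']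
  have hρ : |ρ| < 1 := abs_lt.mpr ⟨by linarith, hρ1⟩
  obtain ⟨w, hw_eq, hw0, hw1, hw0μ, hw1μ, hstat, hval⟩ := exists_dual_vec hμ12 hρ hT hT2
    (one_sub_add_mul_pos hμ1 hρ1 hρu' hA hT hT2) (one_sub_add_mul_lt hρ0 hρ1 hf hρu' hA hT2)
  rw [← hval]
  exact isLeast_gfun_of_dual hρ hT hw_eq hw0 hw1 hw0μ hw1μ hstat
end

section
/- Assume μ1 < μ2 and ρ = ρ̂2. Then √(2(1−ρ̂2)/(μ1² + μ2² − 2ρ̂2·μ1·μ2)) = 1/μ2, the infimum of g over (0,∞)² equals 4μ2 and is attained at (1/μ2, 1/μ2), and s = 1/μ2 is the unique minimizer of the function g2(s) = (1+μ2·s)²/s on (0,∞), with g2(1/μ2) = 4μ2. -/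
open Matrix

/-!
Completing the square in `x` gives `(x, y) Σ_{ts}⁻¹ (x, y)ᵀ ≥ y² / s`, with equality exactly when
`s x = ρ min(t, s) y`. Since `y ≥ 1 + μ₂ s`, AM-GM bounds `y² / s ≥ (1 + μ₂ s)² / s ≥ 4 μ₂`, so
`g ≥ 4 μ₂` everywhere. At `t = s = 1/μ₂` the choice `y = 2`, `x = 2ρ` is admissible precisely when
`ρ ≥ ρ̂₂`, and it makes both inequalities equalities.
-/

lemma dotProduct_covM_inv_mulVec (ρ t s x y : ℝ) :
    ![x, y] ⬝ᵥ ((covM ρ t s)⁻¹ *ᵥ ![x, y]) =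
      (s * x ^ 2 - 2 * (ρ * min t s) * x * y + t * y ^ 2) / (t * s - (ρ * min t s) ^ 2) := by
  rw [covM, Matrix.inv_def, Matrix.adjugate_fin_two_of, Matrix.det_fin_two_of,
    Ring.inverse_eq_inv']
  simp only [mulVec, dotProduct, Fin.sum_univ_two, smul_of, of_apply, cons_val', cons_val_zero,
    cons_val_one, empty_val', cons_val_fin_one, smul_cons, smul_eq_mul, smul_empty]
  ring

lemma dotProduct_covM_inv_mulVec_eq_add {ρ t s : ℝ} (hs : s ≠ 0)
    (hdet : t * s - (ρ * min t s) ^ 2 ≠ 0) (x y : ℝ) :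
    ![x, y] ⬝ᵥ ((covM ρ t s)⁻¹ *ᵥ ![x, y]) =
      y ^ 2 / s + (s * x - ρ * min t s * y) ^ 2 / (s * (t * s - (ρ * min t s) ^ 2)) := by
  rw [dotProduct_covM_inv_mulVec, div_add_div _ _ hs (mul_ne_zero hs hdet),
    div_eq_div_iff hdet (mul_ne_zero hs (mul_ne_zero hs hdet))]
  ring

lemma covM_det_pos {ρ t s : ℝ} (hρ : ρ ^ 2 < 1) (ht : 0 < t) (hs : 0 < s) :
    0 < t * s - (ρ * min t s) ^ 2 := by
  have hm : min t s * min t s ≤ t * s :=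
    mul_le_mul (min_le_left t s) (min_le_right t s) (lt_min ht hs).le ht.le
  nlinarith [mul_pos (lt_min ht hs) (lt_min ht hs)]

lemma sq_div_le_dotProduct_covM_inv_mulVec {ρ t s : ℝ} (hρ : ρ ^ 2 < 1) (ht : 0 < t)
    (hs : 0 < s) (x y : ℝ) :
    y ^ 2 / s ≤ ![x, y] ⬝ᵥ ((covM ρ t s)⁻¹ *ᵥ ![x, y]) := by
  have hdet := covM_det_pos hρ ht hs
  rw [dotProduct_covM_inv_mulVec_eq_add hs.ne' hdet.ne']
  exact le_add_of_nonneg_right (by positivity)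

lemma four_mul_le_sq_one_add_mul_div (μ : ℝ) {s : ℝ} (hs : 0 < s) :
    4 * μ ≤ (1 + μ * s) ^ 2 / s := by
  rw [le_div_iff₀ hs]
  nlinarith [sq_nonneg (1 - μ * s)]

lemma eq_one_div_of_sq_one_add_mul_div_eq {μ s : ℝ} (hs : 0 < s)
    (h : (1 + μ * s) ^ 2 / s = 4 * μ) : s = 1 / μ := by
  rw [div_eq_iff hs.ne'] at h
  have hμs : μ * s = 1 := by nlinarith [sq_nonneg (1 - μ * s)]
  rw [eq_div_iff (left_ne_zero_of_mul_eq_one hμs)]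
  linarith

lemma sq_one_add_mul_one_div_div {μ : ℝ} (hμ : μ ≠ 0) :
    (1 + μ * (1 / μ)) ^ 2 / (1 / μ) = 4 * μ := by
  field_simp
  norm_num

lemma four_mul_le_dotProduct_covM_inv_mulVec {ρ t s μ y : ℝ} (hρ : ρ ^ 2 < 1) (ht : 0 < t)
    (hs : 0 < s) (hμ : 0 ≤ μ) (hy : 1 + μ * s ≤ y) (x : ℝ) :
    4 * μ ≤ ![x, y] ⬝ᵥ ((covM ρ t s)⁻¹ *ᵥ ![x, y]) :=
  calc 4 * μ ≤ (1 + μ * s) ^ 2 / s := four_mul_le_sq_one_add_mul_div μ hs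
    _ ≤ y ^ 2 / s := by gcongr
    _ ≤ _ := sq_div_le_dotProduct_covM_inv_mulVec hρ ht hs x y

lemma four_mul_le_gfun {ρ t s μ2 : ℝ} (μ1 : ℝ) (hμ2 : 0 ≤ μ2) (hρ : ρ ^ 2 < 1) (ht : 0 < t)
    (hs : 0 < s) :
    4 * μ2 ≤ gfun ρ μ1 μ2 t s := by
  refine le_csInf ⟨_, 1 + μ1 * t, 1 + μ2 * s, le_rfl, le_rfl, rfl⟩ ?_
  rintro v ⟨x, y, -, hy, rfl⟩
  exact four_mul_le_dotProduct_covM_inv_mulVec hρ ht hs hμ2 hy x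

lemma gfun_one_div_one_div {ρ μ1 μ2 : ℝ} (hμ2 : 0 < μ2) (hρ : ρ ^ 2 < 1)
    (hρ₂ : (μ1 + μ2) / (2 * μ2) ≤ ρ) :
    gfun ρ μ1 μ2 (1 / μ2) (1 / μ2) = 4 * μ2 := by
  have hs : 0 < 1 / μ2 := one_div_pos.mpr hμ2
  have hx : 1 + μ1 * (1 / μ2) ≤ 2 * ρ := by
    have : 1 + μ1 * (1 / μ2) = 2 * ((μ1 + μ2) / (2 * μ2)) := by field_simp; ring
    linarith
  have hy : 1 + μ2 * (1 / μ2) = 2 := by rw [mul_one_div_cancel hμ2.ne']; norm_num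
  refine le_antisymm (csInf_le ⟨4 * μ2, ?_⟩ ⟨2 * ρ, 2, hx, hy.le, ?_⟩)
    (four_mul_le_gfun μ1 hμ2.le hρ hs hs)
  · rintro v ⟨x, y, -, hy', rfl⟩
    exact four_mul_le_dotProduct_covM_inv_mulVec hρ hs hs hμ2.le hy' x
  · -- `x = 2ρ` kills the square completed in `x`
    rw [dotProduct_covM_inv_mulVec_eq_add hs.ne' (covM_det_pos hρ hs hs).ne', min_self]
    field_simp
    ring

lemma sqrt_two_mul_one_sub_div_eq_one_div {ρ μ1 μ2 : ℝ} (hρ : ρ = (μ1 + μ2) / (2 * μ2))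
    (hμ2 : 0 < μ2) (hμ12 : μ1 ≠ μ2) :
    Real.sqrt (2 * (1 - ρ) / (μ1 ^ 2 + μ2 ^ 2 - 2 * ρ * μ1 * μ2)) = 1 / μ2 := by
  have hden : μ1 ^ 2 + μ2 ^ 2 - 2 * ρ * μ1 * μ2 = μ2 * (μ2 - μ1) := by
    rw [hρ]; field_simp; ring
  have hsub : μ2 - μ1 ≠ 0 := sub_ne_zero.mpr hμ12.symm
  rw [hden, ← Real.sqrt_sq (one_div_pos.mpr hμ2).le, hρ]
  congr 1
  field_simp
  ring

/-- If `μ₁ < μ₂` and `ρ = ρ̂₂`, then `√(2(1-ρ̂₂)/(μ₁² + μ₂² - 2ρ̂₂μ₁μ₂)) = 1/μ₂`, the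
infimum of `g` over `(0,∞)²` equals `4μ₂` and is attained at `(1/μ₂, 1/μ₂)`, and
`s = 1/μ₂` is the unique minimizer of `g₂(s) = (1+μ₂s)²/s` on `(0,∞)`, with
`g₂(1/μ₂) = 4μ₂`. -/
theorem statement14 (ρ μ1 μ2 : ℝ) (hρ : ρ = (μ1 + μ2) / (2 * μ2))
    (hμ1 : 0 < μ1) (hμ12 : μ1 < μ2) :
    Real.sqrt (2 * (1 - ρ) / (μ1 ^ 2 + μ2 ^ 2 - 2 * ρ * μ1 * μ2)) = 1 / μ2 ∧
      IsLeast {v : ℝ | ∃ t s : ℝ, 0 < t ∧ 0 < s ∧ v = gfun ρ μ1 μ2 t s} (4 * μ2) ∧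
      gfun ρ μ1 μ2 (1 / μ2) (1 / μ2) = 4 * μ2 ∧
      (1 + μ2 * (1 / μ2)) ^ 2 / (1 / μ2) = 4 * μ2 ∧
      (∀ s : ℝ, 0 < s → 4 * μ2 ≤ (1 + μ2 * s) ^ 2 / s) ∧
      ∀ s : ℝ, 0 < s → (1 + μ2 * s) ^ 2 / s = 4 * μ2 → s = 1 / μ2 := by
  have hμ2 : 0 < μ2 := hμ1.trans hμ12
  have hρ_sq : ρ ^ 2 < 1 := by
    have hρ0 : 0 < ρ := by rw [hρ]; positivity
    have hρ1 : ρ < 1 := by rw [hρ, div_lt_one (by positivity)]; linarith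
    nlinarith
  have hg := gfun_one_div_one_div hμ2 hρ_sq hρ.ge
  have hinv : 0 < 1 / μ2 := one_div_pos.mpr hμ2
  refine ⟨sqrt_two_mul_one_sub_div_eq_one_div hρ hμ2 hμ12.ne, ⟨⟨_, _, hinv, hinv, hg.symm⟩, ?_⟩, hg,
    sq_one_add_mul_one_div_div hμ2.ne', fun s hs ↦ four_mul_le_sq_one_add_mul_div μ2 hs,
    fun s hs ↦ eq_one_div_of_sq_one_add_mul_div_eq hs⟩
  rintro v ⟨t, s, ht, hs, rfl⟩
  exact four_mul_le_gfun μ1 hμ2.le hρ_sq ht hs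
end
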